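/- arXiv:1110.5435 — 5 statements merged into one kernel-verified Lean document; each statement's English description precedes it below -/
import Mathlib

section
/- Let 𝓕 be a filterdual with b𝓕 = 𝓕, let (X,T) be a dynamical system and x, y ∈ X. Then x is 𝓕-strongly proximal to y if and only if y is an 𝓕-recurrent point and x is strongly proximal to y. -/
open Finset

/-- An ultrafilter `p` on `ℕ₊` is idempotent: `p + p = p`, where
`A ∈ p + q ↔ {n | {m | n + m ∈ A} ∈ q} ∈ p`. -/
def IsIdempotentUF (p : Ultrafilter ℕ+) : Prop :=
  ∀ A : Set ℕ+, ({n : ℕ+ | {m : ℕ+ | n + m ∈ A} ∈ p} ∈ p ↔ A ∈ p)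

/-- A (Furstenberg) family on `ℕ₊`: a collection of subsets closed under supersets. -/
def IsFamily (F : Set (Set ℕ+)) : Prop :=
  ∀ ⦃A B : Set ℕ+⦄, A ⊆ B → A ∈ F → B ∈ F

/-- A filterdual: a nonempty proper family with the Ramsey property. -/
def IsFilterdual (F : Set (Set ℕ+)) : Prop :=
  IsFamily F ∧ F.Nonempty ∧ F ≠ Set.univ ∧
    ∀ A B : Set ℕ+, A ∪ B ∈ F → A ∈ F ∨ B ∈ F

/-- `p ∈ h(F)`: every member of the ultrafilter `p` belongs to the family `F`. -/
def InHull (F : Set (Set ℕ+)) (p : Ultrafilter ℕ+) : Prop :=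
  ∀ A ∈ p, A ∈ F

/-- `h(F)` is closed under the addition of ultrafilters: whenever `p, q ∈ h(F)`,
every member of `p + q` belongs to `F` (where `A ∈ p + q ↔ {n | {m | n+m ∈ A} ∈ q} ∈ p`). -/
def HullAddClosed (F : Set (Set ℕ+)) : Prop :=
  ∀ p q : Ultrafilter ℕ+, InHull F p → InHull F q →
    ∀ A : Set ℕ+, {n : ℕ+ | {m : ℕ+ | n + m ∈ A} ∈ q} ∈ p → A ∈ F

/-- `A` is an essential `F`-set: some idempotent ultrafilter `p ∈ h(F)` has `A ∈ p`. -/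
def IsEssentialSet (F : Set (Set ℕ+)) (A : Set ℕ+) : Prop :=
  ∃ p : Ultrafilter ℕ+, IsIdempotentUF p ∧ InHull F p ∧ A ∈ p

/-- `x` is an `F`-recurrent point of the system `(X, T)`:
`N(x, U) = {n ∈ ℕ₊ | T^n x ∈ U} ∈ F` for every open neighborhood `U` of `x`. -/
def FRecurrent (F : Set (Set ℕ+)) {X : Type*} [TopologicalSpace X] (T : X → X) (x : X) : Prop :=
  ∀ U : Set X, IsOpen U → x ∈ U → {n : ℕ+ | T^[(n : ℕ)] x ∈ U} ∈ F

/-- `x` is `F`-strongly proximal to `y`: for every open neighborhood `U` of `y`,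
`{n ∈ ℕ₊ | T^n x ∈ U ∧ T^n y ∈ U} ∈ F`. -/
def FStronglyProximal (F : Set (Set ℕ+)) {X : Type*} [TopologicalSpace X]
    (T : X → X) (x y : X) : Prop :=
  ∀ U : Set X, IsOpen U → y ∈ U → {n : ℕ+ | T^[(n : ℕ)] x ∈ U ∧ T^[(n : ℕ)] y ∈ U} ∈ F

/-- `x` is strongly proximal to `y`: `(y, y)` lies in the ω-limit set of `(x, y)`
under `T × T`, i.e. for every open `W ∋ (y,y)` in `X × X` and every `m ∈ ℕ₊`
there is `n ≥ m` with `(T^n x, T^n y) ∈ W`. -/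
def StronglyProximal {X : Type*} [TopologicalSpace X] (T : X → X) (x y : X) : Prop :=
  ∀ W : Set (X × X), IsOpen W → (y, y) ∈ W →
    ∀ m : ℕ+, ∃ n : ℕ+, m ≤ n ∧ (T^[(n : ℕ)] x, T^[(n : ℕ)] y) ∈ W

/-- The block family `bF`: all `A ⊆ ℕ₊` for which there is `B ∈ F` such that every
finite `W ⊆ B` has a nonnegative translate `m + W ⊆ A`. -/
def BlockFamily (F : Set (Set ℕ+)) : Set (Set ℕ+) :=
  {A : Set ℕ+ | ∃ B ∈ F, ∀ W : Finset ℕ+, ↑W ⊆ B →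
    ∃ m : ℕ, ∀ w ∈ W, ∃ k ∈ A, (k : ℕ) = m + (w : ℕ)}

/-- For a filterdual `F` with `bF = F`, a system `(X, T)` and `x, y ∈ X`:
`x` is `F`-strongly proximal to `y` iff `y` is `F`-recurrent and `x` is strongly
proximal to `y`. -/
theorem fstrongly_proximal_iff_frecurrent_and_strongly_proximal (F : Set (Set ℕ+))
    (hfd : IsFilterdual F) (hb : BlockFamily F = F)
    {X : Type*} [TopologicalSpace X] [CompactSpace X] [T2Space X] [Nonempty X]
    (T : X → X) (hT : Continuous T) (x y : X) :
    FStronglyProximal F T x y ↔ (FRecurrent F T y ∧ StronglyProximal T x y) := by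
  classical
  constructor
  · intro h
    have hne : (∅ : Set ℕ+) ∉ F := by
      intro h0
      exact hfd.2.2.1 (Set.eq_univ_of_forall fun A => hfd.1 (Set.empty_subset A) h0)
    refine ⟨fun U hU hyU => hfd.1 (fun n hn => hn.2) (h U hU hyU), ?_⟩
    have H : ∀ U : Set X, IsOpen U → y ∈ U →
        ∃ n : ℕ+, T^[(n : ℕ)] x ∈ U ∧ T^[(n : ℕ)] y ∈ U := by
      intro U hU hyU
      have hF := h U hU hyU
      rcases Set.nonempty_iff_ne_empty.2 (fun he => hne (he ▸ hF)) with ⟨n, hn⟩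
      exact ⟨n, hn⟩
    intro W hW hyyW m
    obtain ⟨u, v, hu, hv, hyu, hyv, huv⟩ := (isOpen_prod_iff.1 hW) y y hyyW
    have hU : IsOpen (u ∩ v) := hu.inter hv
    have hyU : y ∈ u ∩ v := ⟨hyu, hyv⟩
    have hUW : ∀ a b : X, a ∈ u ∩ v → b ∈ u ∩ v → (a, b) ∈ W :=
      fun a b ha hb => huv ⟨ha.1, hb.2⟩
    by_cases hcase : ∃ n : ℕ+, T^[(n : ℕ)] x = y ∧ T^[(n : ℕ)] y = y
    · obtain ⟨n₀, hx0, hy0⟩ := hcase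
      have hy' : ∀ k : ℕ, T^[k * (n₀ : ℕ)] y = y := by
        intro k
        induction k with
        | zero => simp
        | succ k ih => rw [Nat.succ_mul, Function.iterate_add_apply, hy0, ih]
      have hx' : ∀ k : ℕ, T^[(k + 1) * (n₀ : ℕ)] x = y := by
        intro k
        rw [Nat.succ_mul, Function.iterate_add_apply, hx0, hy' k]
      refine ⟨m * n₀, ?_, ?_⟩
      · rw [← PNat.coe_le_coe, PNat.mul_coe]
        exact Nat.le_mul_of_pos_right _ n₀.pos
      · obtain ⟨k, hk⟩ : ∃ k : ℕ, (m : ℕ) = k + 1 := ⟨(m : ℕ) - 1, by have := m.pos; omega⟩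
        have hm : ((m * n₀ : ℕ+) : ℕ) = (k + 1) * (n₀ : ℕ) := by rw [PNat.mul_coe, hk]
        have hmx : T^[((m * n₀ : ℕ+) : ℕ)] x = y := by rw [hm]; exact hx' k
        have hmy : T^[((m * n₀ : ℕ+) : ℕ)] y = y := by rw [hm]; exact hy' (k + 1)
        rw [hmx, hmy]; exact hyyW
    · push_neg at hcase
      set z : ℕ+ → X := fun j =>
        if T^[(j : ℕ)] x = y then T^[(j : ℕ)] y else T^[(j : ℕ)] x with hzdef
      have hz : ∀ j : ℕ+, z j ≠ y := by
        intro j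
        by_cases hj : T^[(j : ℕ)] x = y
        · simp only [hzdef, if_pos hj]; exact hcase j hj
        · simp only [hzdef, if_neg hj]; exact hj
      have hCfin : (z '' Set.Icc 1 m).Finite := (Set.finite_Icc 1 m).image z
      have hU' : IsOpen ((u ∩ v) \ (z '' Set.Icc 1 m)) := hU.sdiff hCfin.isClosed
      have hyU' : y ∈ (u ∩ v) \ (z '' Set.Icc 1 m) := by
        refine ⟨hyU, ?_⟩
        rintro ⟨j, -, hj⟩
        exact hz j hj
      obtain ⟨n, hnx, hny⟩ := H _ hU' hyU'
      have hmn : m ≤ n := by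
        by_contra hlt
        have hn' : n ∈ Set.Icc 1 m := ⟨n.one_le, le_of_lt (lt_of_not_ge hlt)⟩
        by_cases hj : T^[(n : ℕ)] x = y
        · exact hny.2 ⟨n, hn', by simp only [hzdef, if_pos hj]⟩
        · exact hnx.2 ⟨n, hn', by simp only [hzdef, if_neg hj]⟩
      exact ⟨n, hmn, hUW _ _ hnx.1 hny.1⟩
  · rintro ⟨hrec, hsp⟩
    intro U hU hyU
    rw [← hb]
    refine ⟨{n : ℕ+ | T^[(n : ℕ)] y ∈ U}, hrec U hU hyU, ?_⟩
    intro W hWB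
    have hOopen : IsOpen (⋂ w ∈ W, (fun s => T^[((w : ℕ+) : ℕ)] s) ⁻¹' U) :=
      isOpen_biInter_finset fun w _ => hU.preimage (hT.iterate _)
    have hyO : y ∈ ⋂ w ∈ W, (fun s => T^[((w : ℕ+) : ℕ)] s) ⁻¹' U :=
      Set.mem_iInter₂.2 fun w hw => hWB hw
    obtain ⟨n, -, hnO⟩ := hsp _ (hOopen.prod hOopen) ⟨hyO, hyO⟩ 1
    refine ⟨(n : ℕ), fun w hw => ⟨n + w, ?_, by rw [PNat.add_coe]⟩⟩
    have hnx : T^[(n : ℕ)] x ∈ (fun s => T^[(w : ℕ)] s) ⁻¹' U :=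
      Set.mem_iInter₂.1 hnO.1 w hw
    have hny : T^[(n : ℕ)] y ∈ (fun s => T^[(w : ℕ)] s) ⁻¹' U :=
      Set.mem_iInter₂.1 hnO.2 w hw
    constructor
    · rw [PNat.add_coe, add_comm, Function.iterate_add_apply]; exact hnx
    · rw [PNat.add_coe, add_comm, Function.iterate_add_apply]; exact hny
end

section
/- Let p be an idempotent ultrafilter on ℕ and F ⊆ ℕ. Then F ∈ p if and only if there is a decreasing sequence (C_n)_{n=1}^∞ of subsets of F such that for every n ∈ ℕ, C_n ∈ p, and for every r ∈ C_n there exists m ∈ ℕ with r + C_m ⊆ C_n. -/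
open Finset

def uShift (r : ℕ+) (D : Set ℕ+) : Set ℕ+ := {c | r + c ∈ D}

def uStar (p : Ultrafilter ℕ+) (D : Set ℕ+) : Set ℕ+ :=
  {r | r ∈ D ∧ uShift r D ∈ p}

lemma uStar_subset (p : Ultrafilter ℕ+) (D : Set ℕ+) : uStar p D ⊆ D :=
  fun _ h => h.1

lemma uStar_mem {p : Ultrafilter ℕ+} (hp : IsIdempotentUF p) {D : Set ℕ+}
    (hD : D ∈ p) : uStar p D ∈ p := by
  have h2 : {n : ℕ+ | {m : ℕ+ | n + m ∈ D} ∈ p} ∈ p := (hp D).mpr hD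
  exact Filter.mem_of_superset (Filter.inter_mem hD h2) (fun r hr => ⟨hr.1, hr.2⟩)

lemma uShift_uStar (p : Ultrafilter ℕ+) (r : ℕ+) (D : Set ℕ+) :
    uShift r (uStar p D) = uStar p (uShift r D) := by
  ext c
  simp only [uShift, uStar, Set.mem_setOf_eq, add_assoc]

inductive GoodSet (p : Ultrafilter ℕ+) : Set ℕ+ → Prop
  | star (D : Set ℕ+) (hD : D ∈ p) : GoodSet p (uStar p D)
  | inter {C C' : Set ℕ+} : GoodSet p C → GoodSet p C' → GoodSet p (C ∩ C')

lemma GoodSet.memUF {p : Ultrafilter ℕ+} (hp : IsIdempotentUF p) {C : Set ℕ+}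
    (h : GoodSet p C) : C ∈ p := by
  induction h with
  | star D hD => exact uStar_mem hp hD
  | inter h1 h2 ih1 ih2 => exact Filter.inter_mem ih1 ih2

lemma GoodSet.shift {p : Ultrafilter ℕ+} {C : Set ℕ+}
    (h : GoodSet p C) : ∀ r ∈ C, GoodSet p (uShift r C) := by
  induction h with
  | star D hD =>
    intro r hr
    rw [uShift_uStar]
    exact GoodSet.star _ hr.2
  | inter h1 h2 ih1 ih2 =>
    intro r hr
    exact GoodSet.inter (ih1 r hr.1) (ih2 r hr.2)

open Classical in
noncomputable def uSeq (p : Ultrafilter ℕ+) (A : Set ℕ+) : ℕ → Set ℕ+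
  | 0 => uStar p A
  | (k+1) =>
    if (Nat.unpair k).2.succPNat ∈ uSeq p A (Nat.unpair k).1 then
      uSeq p A k ∩ uShift (Nat.unpair k).2.succPNat (uSeq p A (Nat.unpair k).1)
    else uSeq p A k
  decreasing_by
    all_goals first
      | exact Nat.lt_succ_self k
      | exact Nat.lt_succ_of_le (Nat.unpair_left_le k)

lemma uSeq_succ_subset (p : Ultrafilter ℕ+) (A : Set ℕ+) (k : ℕ) :
    uSeq p A (k+1) ⊆ uSeq p A k := by
  simp only [uSeq]
  split_ifs with h
  · exact Set.inter_subset_left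
  · exact subset_rfl

lemma uSeq_anti (p : Ultrafilter ℕ+) (A : Set ℕ+) :
    ∀ {m k : ℕ}, m ≤ k → uSeq p A k ⊆ uSeq p A m := by
  intro m k h
  induction k with
  | zero => simp_all
  | succ k ih =>
    rcases Nat.eq_or_lt_of_le h with rfl | h'
    · exact subset_rfl
    · exact (uSeq_succ_subset p A k).trans (ih (Nat.lt_succ_iff.mp h'))

lemma uSeq_good {p : Ultrafilter ℕ+} {A : Set ℕ+} (hA : A ∈ p) (k : ℕ) :
    GoodSet p (uSeq p A k) := by
  induction k using Nat.strong_induction_on with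
  | _ k ih =>
    cases k with
    | zero =>
      simp only [uSeq]
      exact GoodSet.star A hA
    | succ k =>
      simp only [uSeq]
      split_ifs with h
      · exact GoodSet.inter (ih k (Nat.lt_succ_self k))
          (((ih _ (Nat.lt_succ_of_le (Nat.unpair_left_le k))).shift) _ h)
      · exact ih k (Nat.lt_succ_self k)

/-- For an idempotent ultrafilter `p` on `ℕ₊` and `A ⊆ ℕ₊`: `A ∈ p` iff there is a
decreasing sequence `(C_n)` of subsets of `A` with each `C_n ∈ p` such that for every
`r ∈ C_n` there is `m` with `r + C_m ⊆ C_n`. -/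
theorem mem_idempotent_iff_decreasing_chain (p : Ultrafilter ℕ+)
    (hp : IsIdempotentUF p) (A : Set ℕ+) :
    A ∈ p ↔
      ∃ C : ℕ+ → Set ℕ+,
        (∀ n : ℕ+, C n ⊆ A) ∧
        (∀ n m : ℕ+, n ≤ m → C m ⊆ C n) ∧
        (∀ n : ℕ+, C n ∈ p) ∧
        (∀ n : ℕ+, ∀ r ∈ C n, ∃ m : ℕ+, ∀ c ∈ C m, r + c ∈ C n) := by
  constructor
  · intro hA
    refine ⟨fun n => uSeq p A n.natPred, ?_, ?_, ?_, ?_⟩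
    · intro n
      have h0 : uSeq p A n.natPred ⊆ uSeq p A 0 := uSeq_anti p A (Nat.zero_le _)
      refine h0.trans ?_
      simp only [uSeq]
      exact uStar_subset p A
    · intro n m hnm
      exact uSeq_anti p A (by
        have := hnm
        exact Nat.pred_le_pred this)
    · intro n
      exact (uSeq_good hA _).memUF hp
    · intro n r hr
      set a := n.natPred with ha
      set k := Nat.pair a r.natPred with hk
      refine ⟨(k+1).succPNat, ?_⟩
      intro c hc
      have hc : c ∈ uSeq p A (k+1) := by
        simpa only [Nat.natPred_succPNat] using hc
      have hr' : (Nat.unpair k).2.succPNat ∈ uSeq p A (Nat.unpair k).1 := by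
        rw [hk, Nat.unpair_pair]
        simpa [PNat.succPNat_natPred] using hr
      rw [uSeq, if_pos hr'] at hc
      have := hc.2
      rw [hk, Nat.unpair_pair] at this
      simpa [uShift, PNat.succPNat_natPred] using this
  · rintro ⟨C, hsub, _, hmem, _⟩
    exact Filter.mem_of_superset (hmem 1) (hsub 1)
end

section
/- Let 𝓕 be a translation invariant filterdual and let (x_n)_{n=1}^∞ be a sequence in ℕ. If FS((x_n)_{n=1}^∞) ∈ 𝓕, then for every m ∈ ℕ the set FS((x_n)_{n=m}^∞) is an essential 𝓕-set. -/
open Finset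

/-- `FSfrom x m` is the set of finite sums `∑_{n∈α} x n` over nonempty finite
`α ⊆ {m, m+1, …}`. -/
def FSfrom (x : ℕ+ → ℕ+) (m : ℕ+) : Set ℕ+ :=
  {k : ℕ+ | ∃ α : Finset ℕ+, α.Nonempty ∧ (∀ a ∈ α, m ≤ a) ∧
    (k : ℕ) = ∑ n ∈ α, (x n : ℕ)}

/- ### Auxiliary lemmas -/

attribute [local instance] Ultrafilter.add Ultrafilter.addSemigroup

lemma FSfrom.mono (x : ℕ+ → ℕ+) {m m' : ℕ+} (h : m ≤ m') : FSfrom x m' ⊆ FSfrom x m := by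
  rintro k ⟨α, hne, hge, hsum⟩
  exact ⟨α, hne, fun a ha => le_trans h (hge a ha), hsum⟩

lemma FSfrom.shift (x : ℕ+ → ℕ+) {m n : ℕ+} (hn : n ∈ FSfrom x m) :
    ∃ M : ℕ+, ∀ k ∈ FSfrom x M, n + k ∈ FSfrom x m := by
  obtain ⟨α, hne, hge, hsum⟩ := hn
  refine ⟨α.max' hne + 1, ?_⟩
  rintro k ⟨β, hbne, hbge, hbsum⟩
  have hdisj : Disjoint α β := by
    rw [Finset.disjoint_left]
    intro a ha hb
    have h1 : a ≤ α.max' hne := Finset.le_max' _ _ ha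
    have h2 : α.max' hne + 1 ≤ a := hbge a hb
    have := le_trans h2 h1
    have : ((α.max' hne : ℕ) + 1 : ℕ) ≤ (α.max' hne : ℕ) := by exact_mod_cast this
    omega
  refine ⟨α ∪ β, hne.mono Finset.subset_union_left, ?_, ?_⟩
  · intro a ha
    rcases Finset.mem_union.mp ha with h | h
    · exact hge a h
    · have h1 : m ≤ α.max' hne := hge _ (α.max'_mem hne)
      have h2 : α.max' hne + 1 ≤ a := hbge a h
      have : (m : ℕ) ≤ (a : ℕ) := by
        have := (PNat.coe_le_coe _ _).mpr h1
        have := (PNat.coe_le_coe _ _).mpr h2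
        push_cast at *
        omega
      exact (PNat.coe_le_coe _ _).mp this
  · have : ((n + k : ℕ+) : ℕ) = (n : ℕ) + (k : ℕ) := rfl
    rw [this, hsum, hbsum, Finset.sum_union hdisj]

lemma FSfrom.step (F : Set (Set ℕ+))
    (hup : ∀ ⦃A B : Set ℕ+⦄, A ⊆ B → A ∈ F → B ∈ F)
    (hram : ∀ A B : Set ℕ+, A ∪ B ∈ F → A ∈ F ∨ B ∈ F)
    (hsing : ∀ c : ℕ+, {c} ∉ F)
    (hminus : ∀ (n : ℕ+) (A : Set ℕ+), A ∈ F → {k : ℕ+ | n + k ∈ A} ∈ F)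
    (x : ℕ+ → ℕ+) (m : ℕ+) (hm : FSfrom x m ∈ F) : FSfrom x (m+1) ∈ F := by
  set C : Set ℕ+ := {k : ℕ+ | ∃ j ∈ FSfrom x (m+1), k = x m + j} with hC
  have hdecomp : FSfrom x m ⊆ FSfrom x (m+1) ∪ ({x m} ∪ C) := by
    rintro k ⟨α, hne, hge, hsum⟩
    simp only [Set.mem_union]
    by_cases hmem : m ∈ α
    · by_cases hcard : α.erase m = ∅
      · right; left
        have : α = {m} := by
          apply Finset.eq_singleton_iff_unique_mem.mpr
          exact ⟨hmem, fun a ha => by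
            by_contra hne'
            exact (Finset.eq_empty_iff_forall_notMem.mp hcard a)
              (Finset.mem_erase.mpr ⟨hne', ha⟩)⟩
        have : (k : ℕ) = (x m : ℕ) := by rw [hsum, this, Finset.sum_singleton]
        have : k = x m := by exact_mod_cast this
        simp [this]
      · right; right
        have hbne : (α.erase m).Nonempty := Finset.nonempty_iff_ne_empty.mpr hcard
        have hpos : 0 < ∑ n ∈ α.erase m, (x n : ℕ) :=
          Finset.sum_pos (fun i _ => (x i).pos) hbne
        refine ⟨⟨∑ n ∈ α.erase m, (x n : ℕ), hpos⟩, ⟨α.erase m, hbne, ?_, rfl⟩, ?_⟩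
        · intro a ha
          have h1 : a ≠ m := (Finset.mem_erase.mp ha).1
          have h2 : m ≤ a := hge a (Finset.mem_erase.mp ha).2
          have : (m : ℕ) + 1 ≤ (a : ℕ) := by
            have := (PNat.coe_le_coe _ _).mpr h2
            have : (a : ℕ) ≠ (m : ℕ) := fun h => h1 (PNat.coe_injective h)
            omega
          exact (PNat.coe_le_coe _ _).mp (by push_cast; omega)
        · apply PNat.coe_injective
          show (k : ℕ) = ((x m : ℕ+) : ℕ) + _
          rw [hsum, ← Finset.add_sum_erase _ _ hmem]
    · left
      refine ⟨α, hne, ?_, hsum⟩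
      intro a ha
      have h1 : a ≠ m := fun h => hmem (h ▸ ha)
      have h2 : m ≤ a := hge a ha
      have : (m : ℕ) + 1 ≤ (a : ℕ) := by
        have := (PNat.coe_le_coe _ _).mpr h2
        have : (a : ℕ) ≠ (m : ℕ) := fun h => h1 (PNat.coe_injective h)
        omega
      exact (PNat.coe_le_coe _ _).mp (by push_cast; omega)
  have hU : FSfrom x (m+1) ∪ ({x m} ∪ C) ∈ F := hup hdecomp hm
  rcases hram _ _ hU with h | h
  · exact h
  rcases hram _ _ h with h | h
  · exact absurd h (hsing _)
  · have := hminus (x m) C h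
    have heq : {k : ℕ+ | x m + k ∈ C} = FSfrom x (m+1) := by
      ext k
      simp only [hC, Set.mem_setOf_eq]
      constructor
      · rintro ⟨j, hj, hjk⟩
        have : k = j := add_left_cancel hjk
        rwa [this]
      · intro hk; exact ⟨k, hk, rfl⟩
    rwa [heq] at this

/-- For a translation invariant filterdual `F` and a sequence `x` in `ℕ₊` with
`FS((x_n)_(n=1)^∞) ∈ F`: for every `m`, `FS((x_n)_(n=m)^∞)` is an essential `F`-set. -/
theorem fs_essential (F : Set (Set ℕ+)) (hfd : IsFilterdual F)
    (hplus : ∀ (n : ℕ+) (A : Set ℕ+), A ∈ F → {k : ℕ+ | ∃ j ∈ A, k = n + j} ∈ F)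
    (hminus : ∀ (n : ℕ+) (A : Set ℕ+), A ∈ F → {k : ℕ+ | n + k ∈ A} ∈ F)
    (x : ℕ+ → ℕ+) (hFS : FSfrom x 1 ∈ F) :
    ∀ m : ℕ+, IsEssentialSet F (FSfrom x m) := by
  obtain ⟨hup, hFne, hnontriv, hram⟩ := hfd
  have hempty : (∅ : Set ℕ+) ∉ F := by
    intro h
    exact hnontriv (Set.eq_univ_of_forall fun A => hup (Set.empty_subset A) h)
  have hsing : ∀ c : ℕ+, {c} ∉ F := by
    intro c h
    have := hminus c _ h
    have heq : {k : ℕ+ | c + k ∈ ({c} : Set ℕ+)} = ∅ := by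
      ext k
      simp only [Set.mem_setOf_eq, Set.mem_singleton_iff, Set.mem_empty_iff_false, iff_false]
      intro hck
      have : ((c + k : ℕ+) : ℕ) = (c : ℕ) := congrArg _ hck
      have hk := k.pos
      have : (c : ℕ) + (k : ℕ) = (c : ℕ) := this
      omega
    rw [heq] at this
    exact hempty this
  have hFSF : ∀ m : ℕ+, FSfrom x m ∈ F := fun m =>
    PNat.recOn m hFS (fun n ih => FSfrom.step F hup hram hsing hminus x n ih)
  -- translate of a dual-filter set is a dual-filter set
  have hshiftG : ∀ (n : ℕ+) (C : Set ℕ+), Cᶜ ∉ F → {k : ℕ+ | n + k ∈ C}ᶜ ∉ F := by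
    intro n C hC h
    have hcompl : {k : ℕ+ | n + k ∈ C}ᶜ = {k : ℕ+ | n + k ∈ Cᶜ} := by
      ext k; simp
    rw [hcompl] at h
    have := hplus n _ h
    apply hC
    apply hup ?_ this
    rintro j ⟨i, hi, rfl⟩
    exact hi
  have hGint : ∀ C D : Set ℕ+, Cᶜ ∉ F → Dᶜ ∉ F → (C ∩ D)ᶜ ∉ F := by
    intro C D hC hD h
    rw [Set.compl_inter] at h
    rcases hram _ _ h with h | h
    exacts [hC h, hD h]
  set L : Filter ℕ+ :=
    { sets := {B | ∃ (m' : ℕ+) (C : Set ℕ+), Cᶜ ∉ F ∧ C ∩ FSfrom x m' ⊆ B}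
      univ_sets := ⟨1, Set.univ, by simpa using hempty, by simp⟩
      sets_of_superset := by
        rintro B B' ⟨m', C, hC, hsub⟩ hBB'
        exact ⟨m', C, hC, hsub.trans hBB'⟩
      inter_sets := by
        rintro B B' ⟨m1, C1, h1, hs1⟩ ⟨m2, C2, h2, hs2⟩
        refine ⟨max m1 m2, C1 ∩ C2, hGint _ _ h1 h2, ?_⟩
        rintro k ⟨⟨hk1, hk2⟩, hkf⟩
        exact ⟨hs1 ⟨hk1, FSfrom.mono x (le_max_left _ _) hkf⟩,
               hs2 ⟨hk2, FSfrom.mono x (le_max_right _ _) hkf⟩⟩ } with hL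
  have hGL : ∀ C : Set ℕ+, Cᶜ ∉ F → C ∈ L := fun C hC =>
    ⟨1, C, hC, Set.inter_subset_left⟩
  have hFSL : ∀ m' : ℕ+, FSfrom x m' ∈ L := fun m' =>
    ⟨m', Set.univ, by simpa using hempty, Set.inter_subset_right⟩
  have hLne : L.NeBot := by
    refine ⟨fun h => ?_⟩
    have : (∅ : Set ℕ+) ∈ L := h ▸ Filter.mem_bot
    obtain ⟨m', C, hC, hsub⟩ := this
    have : FSfrom x m' ⊆ Cᶜ := by
      intro k hk
      by_contra hkc
      exact hsub ⟨not_not.mp hkc, hk⟩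
    exact hC (hup this (hFSF m'))
  set S : Set (Ultrafilter ℕ+) := {p | (p : Filter ℕ+) ≤ L} with hS
  have hSmem : ∀ p : Ultrafilter ℕ+, p ∈ S ↔ ∀ B ∈ L, B ∈ p := fun p => Filter.le_def
  have hSclosed : IsClosed S := by
    have : S = ⋂ B ∈ L.sets, {p : Ultrafilter ℕ+ | B ∈ p} := by
      ext p
      simp only [Set.mem_iInter, Set.mem_setOf_eq]
      exact (hSmem p)
    rw [this]
    exact isClosed_biInter fun B _ => ultrafilter_isClosed_basic B
  have hSne : S.Nonempty := by
    obtain ⟨u, hu⟩ := Ultrafilter.exists_le L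
    exact ⟨u, hu⟩
  have hSadd : ∀ p ∈ S, ∀ q ∈ S, p + q ∈ S := by
    intro p hp q hq
    rw [hSmem]
    rintro B ⟨m', C, hC, hsub⟩
    have key : {n : ℕ+ | {k : ℕ+ | n + k ∈ B} ∈ q} ∈ p := by
      apply p.toFilter.sets_of_superset ((hSmem p).mp hp _ (hFSL m'))
      intro n hn
      obtain ⟨M, hM⟩ := FSfrom.shift x hn
      have h1 : {k : ℕ+ | n + k ∈ C} ∈ q := (hSmem q).mp hq _ (hGL _ (hshiftG n C hC))
      have h2 : FSfrom x M ∈ q := (hSmem q).mp hq _ (hFSL M)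
      have h3 : {k : ℕ+ | n + k ∈ C} ∩ FSfrom x M ∈ q := q.toFilter.inter_sets h1 h2
      apply q.toFilter.sets_of_superset h3
      rintro k ⟨hkC, hkM⟩
      exact hsub ⟨hkC, hM k hkM⟩
    exact (Ultrafilter.eventually_add p q (· ∈ B)).mpr key
  obtain ⟨p, hpS, hidem⟩ := exists_idempotent_in_compact_add_subsemigroup
    Ultrafilter.continuous_add_left S hSne (hSclosed.isCompact) hSadd
  intro m
  refine ⟨p, ?_, ?_, (hSmem p).mp hpS _ (hFSL m)⟩
  · intro A
    have h1 : A ∈ p + p ↔ {n : ℕ+ | {k : ℕ+ | n + k ∈ A} ∈ p} ∈ p :=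
      (Ultrafilter.eventually_add p p (· ∈ A)).symm
    rw [hidem] at h1
    exact h1.symm
  · intro A hA
    by_contra h
    have : Aᶜ ∈ L := hGL _ (by rwa [compl_compl])
    have : Aᶜ ∈ p := (hSmem p).mp hpS _ this
    exact (Ultrafilter.compl_mem_iff_notMem.mp this) hA
end

section
/- Let 𝓕 be a filterdual such that h(𝓕) is closed under the addition of ultrafilters, and let F ⊆ ℕ. Then F forces 𝓕-recurrence (i.e., for every dynamical system (X,T) and every x ∈ X the closure of {T^n x : n ∈ F} contains an 𝓕-recurrent point) if and only if F belongs to the block family b(𝓕̃) of the family 𝓕̃ of essential 𝓕-sets, i.e., there exists an essential 𝓕-set F′ such that for every finite W ⊆ F′ there is m ∈ ℤ₊ with m + W ⊆ F. -/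
open Finset

open Filter Topology

attribute [local instance] Ultrafilter.add Ultrafilter.addSemigroup

private lemma mem_uadd (U V : Ultrafilter ℕ+) (C : Set ℕ+) :
    C ∈ U + V ↔ {n : ℕ+ | {m : ℕ+ | n + m ∈ C} ∈ V} ∈ U := Iff.rfl

private lemma exists_ulim {X : Type} [TopologicalSpace X] [CompactSpace X] {α : Type}
    (u : Ultrafilter α) (f : α → X) : ∃ z : X, Tendsto f ↑u (nhds z) := by
  obtain ⟨z, -, hz⟩ := (isCompact_univ (X := X)).ultrafilter_le_nhds (u.map f) (by simp)
  exact ⟨z, hz⟩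

private lemma exists_idem_hull (F : Set (Set ℕ+)) (hfd : IsFilterdual F) (hadd : HullAddClosed F)
    (N : ℕ → Set ℕ+) (hNF : ∀ k, N k ∈ F) (hNanti : ∀ i j : ℕ, i ≤ j → N j ⊆ N i)
    (hNshift : ∀ (k : ℕ) (n : ℕ+), n ∈ N k → ∀ m : ℕ+, m ∈ N (k + (n : ℕ)) → n + m ∈ N k) :
    ∃ p : Ultrafilter ℕ+, IsIdempotentUF p ∧ InHull F p ∧ ∀ k, N k ∈ p := by
  obtain ⟨hfam, hne, hproper, hram⟩ := hfd
  have hempty : (∅ : Set ℕ+) ∉ F := by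
    intro h
    exact hproper (Set.eq_univ_of_forall fun C => hfam (Set.empty_subset C) h)
  -- the dual filter
  let G : Filter ℕ+ :=
    { sets := {C | Cᶜ ∉ F}
      univ_sets := by simpa using hempty
      sets_of_superset := by
        intro C D hC hCD hD
        exact hC (hfam (Set.compl_subset_compl.mpr hCD) hD)
      inter_sets := by
        intro C D hC hD h
        rw [Set.compl_inter] at h
        rcases hram _ _ h with h' | h'
        exacts [hC h', hD h'] }
  have hGmem : ∀ C : Set ℕ+, C ∈ G ↔ Cᶜ ∉ F := fun _ => Iff.rfl
  -- meets every F-set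
  have hGmeet : ∀ C ∈ G, ∀ D ∈ F, (C ∩ D).Nonempty := by
    intro C hC D hD
    rw [Set.nonempty_iff_ne_empty]
    intro h
    have : D ⊆ Cᶜ := by
      intro n hn hc
      exact absurd h (Set.nonempty_iff_ne_empty.mp ⟨n, hc, hn⟩)
    exact (hGmem C).mp hC (hfam this hD)
  let L : Filter ℕ+ := G ⊓ ⨅ k, 𝓟 (N k)
  have hdir : Directed (· ≥ ·) fun k => 𝓟 (N k) := by
    intro i j
    exact ⟨max i j, principal_mono.mpr (hNanti _ _ (le_max_left i j)),
      principal_mono.mpr (hNanti _ _ (le_max_right i j))⟩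
  have hLne : L.NeBot := by
    rw [← forall_mem_nonempty_iff_neBot]
    intro s hs
    rcases Filter.mem_inf_iff.mp hs with ⟨t₁, ht₁, t₂, ht₂, rfl⟩
    rcases (Filter.mem_iInf_of_directed hdir _).mp ht₂ with ⟨k, hk⟩
    have h1 : (t₁ ∩ N k).Nonempty := hGmeet t₁ ht₁ (N k) (hNF k)
    exact h1.mono (Set.inter_subset_inter_right t₁ hk)
  obtain ⟨p₀, hp₀⟩ := Ultrafilter.exists_le L
  let P : Set (Ultrafilter ℕ+) := {p | InHull F p ∧ ∀ k, N k ∈ p}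
  have hmemP : p₀ ∈ P := by
    constructor
    · intro C hC
      by_contra hCF
      have : Cᶜ ∈ p₀ := hp₀ (Filter.mem_inf_of_left ((hGmem Cᶜ).mpr (by simpa using hCF)))
      exact (Ultrafilter.compl_notMem_iff.mpr hC) this
    · intro k
      exact hp₀ (Filter.mem_inf_of_right (Filter.mem_iInf_of_mem k (mem_principal_self _)))
  have hPclosed : IsClosed P := by
    have hP : P = (⋂ C ∈ {C : Set ℕ+ | C ∉ F}, {p : Ultrafilter ℕ+ | C ∈ p}ᶜ) ∩
        ⋂ k, {p : Ultrafilter ℕ+ | N k ∈ p} := by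
      ext p
      constructor
      · rintro ⟨h1, h2⟩
        exact Set.mem_inter (Set.mem_iInter₂.mpr fun C hC hCp => hC (h1 C hCp))
          (Set.mem_iInter.mpr h2)
      · rintro ⟨h1, h2⟩
        exact ⟨fun C hCp => by_contra fun hC => Set.mem_iInter₂.mp h1 C hC hCp,
          Set.mem_iInter.mp h2⟩
    rw [hP]
    exact ((isClosed_biInter fun C _ => (ultrafilter_isOpen_basic C).isClosed_compl).inter
      (isClosed_iInter fun k => ultrafilter_isClosed_basic _))
  have hPadd : ∀ p ∈ P, ∀ q ∈ P, p + q ∈ P := by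
    rintro p ⟨hp1, hp2⟩ q ⟨hq1, hq2⟩
    constructor
    · intro C hC
      exact hadd p q hp1 hq1 C ((mem_uadd p q C).mp hC)
    · intro k
      rw [mem_uadd]
      refine p.mem_of_superset (hp2 k) ?_
      intro n hn
      refine q.mem_of_superset (hq2 (k + (n : ℕ))) ?_
      intro m hm
      exact hNshift k n hn m hm
  obtain ⟨p, hpP, hpp⟩ := exists_idempotent_in_compact_add_subsemigroup
    Ultrafilter.continuous_add_left P ⟨p₀, hmemP⟩ hPclosed.isCompact hPadd
  refine ⟨p, ?_, hpP.1, hpP.2⟩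
  intro C
  rw [← mem_uadd p p C, hpp]

private lemma forward (F : Set (Set ℕ+)) (hfd : IsFilterdual F) (hadd : HullAddClosed F)
    (A : Set ℕ+)
    (h : ∀ (X : Type) [TopologicalSpace X] [CompactSpace X] [T2Space X] [Nonempty X]
      (T : X → X), Continuous T → ∀ x : X,
        ∃ z ∈ closure {w : X | ∃ n ∈ A, w = T^[(n : ℕ)] x}, FRecurrent F T z) :
    ∃ B : Set ℕ+, IsEssentialSet F B ∧
      ∀ W : Finset ℕ+, ↑W ⊆ B → ∃ m : ℕ, ∀ w ∈ W, ∃ k ∈ A, (k : ℕ) = m + (w : ℕ) := by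
  classical
  let T : (ℕ → Bool) → (ℕ → Bool) := fun f j => f (j + 1)
  have hT : Continuous T := continuous_pi fun j => continuous_apply (j + 1)
  let x : ℕ → Bool := fun j => decide (∃ a ∈ A, (a : ℕ) = j)
  have hiter : ∀ (n : ℕ) (f : ℕ → Bool) (j : ℕ), T^[n] f j = f (j + n) := by
    intro n
    induction n with
    | zero => intro f j; simp
    | succ n ih =>
      intro f j
      rw [Function.iterate_succ_apply, ih]
      exact congrArg f (by omega)
  have hopen : ∀ (g : ℕ → Bool) (k : ℕ), IsOpen {f : ℕ → Bool | ∀ j ≤ k, f j = g j} := by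
    intro g k
    have he : {f : ℕ → Bool | ∀ j ≤ k, f j = g j}
        = ⋂ j ∈ Finset.range (k + 1), (fun f : ℕ → Bool => f j) ⁻¹' {g j} := by
      ext f
      simp [Nat.lt_succ_iff]
    rw [he]
    exact isOpen_biInter_finset fun j _ =>
      (continuous_apply j).isOpen_preimage _ (isOpen_discrete _)
  obtain ⟨z, hzcl, hzrec⟩ := h (ℕ → Bool) T hT x
  have hwin : ∀ k : ℕ, ∃ a ∈ A, ∀ j ≤ k, x (j + (a : ℕ)) = z j := by
    intro k
    have hzU : z ∈ {f : ℕ → Bool | ∀ j ≤ k, f j = z j} := fun j _ => rfl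
    obtain ⟨w, hw1, hw2⟩ := mem_closure_iff.mp hzcl _ (hopen z k) hzU
    obtain ⟨a, haA, rfl⟩ := hw2
    exact ⟨a, haA, fun j hj => by rw [← hiter (a : ℕ) x j]; exact hw1 j hj⟩
  have hz0 : z 0 = true := by
    obtain ⟨a, haA, ha⟩ := hwin 0
    have h0 := ha 0 le_rfl
    rw [← h0]
    exact decide_eq_true ⟨a, haA, by omega⟩
  set N : ℕ → Set ℕ+ := fun k => {n : ℕ+ | ∀ j ≤ k, z (j + (n : ℕ)) = z j} with hN
  have hNF : ∀ k, N k ∈ F := by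
    intro k
    have h1 := hzrec _ (hopen z k) (fun j _ => rfl)
    convert h1 using 1
    ext n
    simp only [hN, Set.mem_setOf_eq]
    constructor
    · intro hn j hj; rw [hiter]; exact hn j hj
    · intro hn j hj; rw [← hiter ((n : ℕ)) z j]; exact hn j hj
  have hNanti : ∀ i j : ℕ, i ≤ j → N j ⊆ N i := fun i j hij n hn l hl => hn l (le_trans hl hij)
  have hNshift : ∀ (k : ℕ) (n : ℕ+), n ∈ N k → ∀ m : ℕ+, m ∈ N (k + (n : ℕ)) → n + m ∈ N k := by
    intro k n hn m hm j hj
    have h2 : j + ((n + m : ℕ+) : ℕ) = (j + (n : ℕ)) + (m : ℕ) := by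
      rw [PNat.add_coe]; omega
    rw [h2, hm (j + (n : ℕ)) (by omega), hn j hj]
  obtain ⟨p, hidem, hhull, hNp⟩ := exists_idem_hull F hfd hadd N hNF hNanti hNshift
  refine ⟨{j : ℕ+ | z (j : ℕ) = true}, ⟨p, hidem, hhull, ?_⟩, ?_⟩
  · refine p.mem_of_superset (hNp 0) ?_
    intro n hn
    have h3 := hn 0 le_rfl
    simpa [hz0] using h3
  · intro W hW
    obtain ⟨a, haA, ha⟩ := hwin (W.sup fun w => (w : ℕ))
    refine ⟨(a : ℕ), fun w hw => ?_⟩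
    have hwk : (w : ℕ) ≤ W.sup fun w => (w : ℕ) := Finset.le_sup hw
    have hzw : z (w : ℕ) = true := hW hw
    have h4 := ha (w : ℕ) hwk
    rw [hzw] at h4
    obtain ⟨b, hbA, hb⟩ := of_decide_eq_true h4
    exact ⟨b, hbA, by omega⟩

private lemma backward (F : Set (Set ℕ+)) (A : Set ℕ+)
    (B : Set ℕ+) (p : Ultrafilter ℕ+) (hidem : IsIdempotentUF p) (hhull : InHull F p)
    (hBp : B ∈ p)
    (hblock : ∀ W : Finset ℕ+, ↑W ⊆ B → ∃ m : ℕ, ∀ w ∈ W, ∃ k ∈ A, (k : ℕ) = m + (w : ℕ))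
    (X : Type) [TopologicalSpace X] [CompactSpace X] [T2Space X] [Nonempty X]
    (T : X → X) (hT : Continuous T) (x : X) :
    ∃ z ∈ closure {w : X | ∃ n ∈ A, w = T^[(n : ℕ)] x}, FRecurrent F T z := by
  classical
  let M : Finset ℕ+ → Set ℕ := fun W => {m | ∀ w ∈ W, ∃ k ∈ A, (k : ℕ) = m + (w : ℕ)}
  haveI : Nonempty {W : Finset ℕ+ // ↑W ⊆ B} := ⟨⟨∅, by simp⟩⟩
  let L : Filter ℕ := ⨅ W : {W : Finset ℕ+ // ↑W ⊆ B}, 𝓟 (M W.1)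
  have hdir : Directed (· ≥ ·) fun W : {W : Finset ℕ+ // ↑W ⊆ B} => 𝓟 (M W.1) := by
    intro W₁ W₂
    refine ⟨⟨W₁.1 ∪ W₂.1, ?_⟩, ?_, ?_⟩
    · intro w hw
      rcases Finset.mem_union.mp (by exact_mod_cast hw) with h' | h'
      exacts [W₁.2 (by exact_mod_cast h'), W₂.2 (by exact_mod_cast h')]
    · exact principal_mono.mpr fun m hm w hw => hm w (Finset.mem_union_left _ hw)
    · exact principal_mono.mpr fun m hm w hw => hm w (Finset.mem_union_right _ hw)
  haveI hLne : L.NeBot := by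
    refine iInf_neBot_of_directed hdir fun W => ?_
    rw [principal_neBot_iff]
    obtain ⟨m, hm⟩ := hblock W.1 W.2
    exact ⟨m, hm⟩
  obtain ⟨q, hq⟩ := Ultrafilter.exists_le L
  have hMq : ∀ W : Finset ℕ+, (hWB : ↑W ⊆ B) → M W ∈ q := fun W hWB =>
    hq (Filter.mem_iInf_of_mem ⟨W, hWB⟩ (mem_principal_self _))
  let af : ℕ+ → ℕ → ℕ+ := fun n m => ⟨(n : ℕ) + m, Nat.lt_of_lt_of_le n.2 (Nat.le_add_right _ _)⟩
  let s : Ultrafilter ℕ+ := p.bind fun n => q.map (af n)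
  have mem_s : ∀ C : Set ℕ+, C ∈ s ↔ {n : ℕ+ | {m : ℕ | af n m ∈ C} ∈ q} ∈ p := fun _ => Iff.rfl
  have hAs : A ∈ s := by
    rw [mem_s]
    refine p.mem_of_superset hBp ?_
    intro n hn
    have h1 : M {n} ∈ q := hMq {n} (by simpa using hn)
    refine q.mem_of_superset h1 ?_
    intro m hm
    obtain ⟨k, hkA, hk⟩ := hm n (Finset.mem_singleton_self n)
    have h2 : af n m = k := by
      apply PNat.coe_injective
      show (n : ℕ) + m = (k : ℕ)
      omega
    show af n m ∈ A
    rwa [h2]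
  let f : ℕ+ → X := fun k => T^[(k : ℕ)] x
  obtain ⟨z, hzs⟩ := exists_ulim s f
  have hjlim : ∀ j : ℕ+, Tendsto (fun k => f (j + k)) ↑s (nhds (T^[(j : ℕ)] z)) := by
    intro j
    have h1 : Tendsto (T^[(j : ℕ)] ∘ f) ↑s (nhds (T^[(j : ℕ)] z)) :=
      ((hT.iterate (j : ℕ)).tendsto z).comp hzs
    have hfe : (fun k : ℕ+ => f (j + k)) = T^[(j : ℕ)] ∘ f := by
      funext k
      show T^[((j + k : ℕ+) : ℕ)] x = T^[(j : ℕ)] (T^[(k : ℕ)] x)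
      rw [PNat.add_coe, Function.iterate_add_apply]
    rw [hfe]
    exact h1
  obtain ⟨lpt, hlpt⟩ := exists_ulim p fun j : ℕ+ => T^[(j : ℕ)] z
  let t : Ultrafilter ℕ+ := p.bind fun j => s.map fun k => j + k
  have mem_t : ∀ C : Set ℕ+, C ∈ t ↔ {j : ℕ+ | {k : ℕ+ | j + k ∈ C} ∈ s} ∈ p := fun _ => Iff.rfl
  have hts : t = s := by
    have hmem : ∀ C : Set ℕ+, C ∈ t ↔ C ∈ s := by
      intro C
      rw [mem_t, mem_s]
      set A₀ : Set ℕ+ := {i : ℕ+ | {m : ℕ | af i m ∈ C} ∈ q} with hA₀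
      have h1 : {j : ℕ+ | {k : ℕ+ | j + k ∈ C} ∈ s} = {j : ℕ+ | {n : ℕ+ | j + n ∈ A₀} ∈ p} := by
        ext j
        simp only [Set.mem_setOf_eq]
        rw [mem_s]
        have h2 : {n : ℕ+ | {m : ℕ | af n m ∈ {k : ℕ+ | j + k ∈ C}} ∈ q}
            = {n : ℕ+ | j + n ∈ A₀} := by
          ext n
          simp only [Set.mem_setOf_eq, hA₀]
          have h3 : {m : ℕ | j + af n m ∈ C} = {m : ℕ | af (j + n) m ∈ C} := by
            ext m
            simp only [Set.mem_setOf_eq]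
            have h4 : j + af n m = af (j + n) m := by
              apply PNat.coe_injective
              show ((j + af n m : ℕ+) : ℕ) = ((j + n : ℕ+) : ℕ) + m
              rw [PNat.add_coe, PNat.add_coe]
              show (j : ℕ) + ((n : ℕ) + m) = ((j : ℕ) + (n : ℕ)) + m
              omega
            rw [h4]
          rw [h3]
        rw [h2]
      rw [h1]
      exact hidem A₀
    exact Ultrafilter.coe_injective (Filter.ext fun C => hmem C)
  have hlt : Tendsto f ↑t (nhds lpt) := by
    rw [Filter.tendsto_def]
    intro V hV
    rcases mem_nhds_iff.mp hV with ⟨U, hUV, hUo, hlU⟩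
    refine Filter.mem_of_superset ?_ fun k hk => hUV hk
    show f ⁻¹' U ∈ t
    rw [mem_t]
    refine p.mem_of_superset (Filter.tendsto_def.mp hlpt U (hUo.mem_nhds hlU)) ?_
    intro j hj
    exact Filter.tendsto_def.mp (hjlim j) U (hUo.mem_nhds hj)
  have hlz : lpt = z := by
    rw [hts] at hlt
    exact tendsto_nhds_unique hlt hzs
  refine ⟨z, ?_, ?_⟩
  · rw [mem_closure_iff]
    intro U hUo hzU
    have h1 : f ⁻¹' U ∈ s := Filter.tendsto_def.mp hzs U (hUo.mem_nhds hzU)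
    obtain ⟨k, hk1, hk2⟩ := Ultrafilter.nonempty_of_mem (Filter.inter_mem h1 hAs : _ ∈ s)
    exact ⟨f k, hk1, k, hk2, rfl⟩
  · intro U hUo hzU
    have hlU : lpt ∈ U := by rw [hlz]; exact hzU
    exact hhull _ (Filter.tendsto_def.mp hlpt U (hUo.mem_nhds hlU))

/-- For a filterdual `F` whose hull is closed under addition of ultrafilters, a set
`A ⊆ ℕ₊` forces `F`-recurrence (for every dynamical system `(X, T)` and every `x ∈ X`
the closure of `{T^n x : n ∈ A}` contains an `F`-recurrent point) iff `A` belongs to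
the block family of the family of essential `F`-sets. -/
theorem forces_frecurrence_iff_block_essential (F : Set (Set ℕ+))
    (hfd : IsFilterdual F) (hadd : HullAddClosed F) (A : Set ℕ+) :
    (∀ (X : Type) [TopologicalSpace X] [CompactSpace X] [T2Space X] [Nonempty X]
      (T : X → X), Continuous T → ∀ x : X,
        ∃ z ∈ closure {w : X | ∃ n ∈ A, w = T^[(n : ℕ)] x}, FRecurrent F T z) ↔
    (∃ B : Set ℕ+, IsEssentialSet F B ∧
      ∀ W : Finset ℕ+, ↑W ⊆ B → ∃ m : ℕ, ∀ w ∈ W, ∃ k ∈ A, (k : ℕ) = m + (w : ℕ)) := by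
  
  constructor
  · intro h
    exact forward F hfd hadd A h
  · rintro ⟨B, ⟨p, hidem, hhull, hBp⟩, hblock⟩
    intro X _ _ _ _ T hT x
    exact backward F A B p hidem hhull hBp hblock X T hT x
end

section
/- Let 𝓕 be a filterdual that is multiplication invariant (nF ∈ 𝓕 for every n ∈ ℕ and F ∈ 𝓕) and such that h(𝓕) is closed under the addition of ultrafilters. If F ⊆ ℕ is an essential 𝓕-set, then for every n ∈ ℕ the set nF = {n·k : k ∈ F} is an essential 𝓕-set. -/
open Finset

/-- For a multiplication invariant filterdual `F` whose hull is closed under addition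
of ultrafilters: if `A` is an essential `F`-set, then so is `nA = {n * k : k ∈ A}`
for every `n ∈ ℕ₊`. -/
theorem essential_set_mul (F : Set (Set ℕ+)) (hfd : IsFilterdual F)
    (hmul : ∀ (n : ℕ+) (A : Set ℕ+), A ∈ F → {m : ℕ+ | ∃ k ∈ A, m = n * k} ∈ F)
    (hadd : HullAddClosed F)
    (A : Set ℕ+) (hA : IsEssentialSet F A) (n : ℕ+) :
    IsEssentialSet F {m : ℕ+ | ∃ k ∈ A, m = n * k} := by
  obtain ⟨p, hpid, hph, hpA⟩ := hA
  set q := Ultrafilter.map (fun k => n * k) p with hq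
  have hmem : ∀ B : Set ℕ+, B ∈ q ↔ (fun k => n * k) ⁻¹' B ∈ p :=
    fun B => Ultrafilter.mem_map
  refine ⟨q, ?_, ?_, ?_⟩
  · intro B
    rw [hmem, hmem]
    have hset : ∀ k : ℕ+, (fun k => n * k) ⁻¹' {m : ℕ+ | n * k + m ∈ B}
        = {m : ℕ+ | k + m ∈ (fun k => n * k) ⁻¹' B} := by
      intro k; ext m; simp [mul_add]
    have hpre : (fun k => n * k) ⁻¹' {x : ℕ+ | {m : ℕ+ | x + m ∈ B} ∈ q}
        = {k : ℕ+ | {m : ℕ+ | k + m ∈ (fun k => n * k) ⁻¹' B} ∈ p} := by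
      ext k
      simp only [Set.mem_preimage, Set.mem_setOf_eq, hmem, hset]
    rw [hpre, hpid]
  · intro B hB
    rw [hmem] at hB
    have h1 : (fun k => n * k) ⁻¹' B ∈ F := hph _ hB
    have h2 := hmul n _ h1
    refine hfd.1 ?_ h2
    rintro m ⟨k, hk, rfl⟩
    exact hk
  · rw [hmem]
    exact Filter.mem_of_superset hpA fun k hk => ⟨k, hk, rfl⟩
end
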